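/- Twisting by χ⁻¹ undoes twisting by χ on coactions of crossed modules: let (V, ▷, β) be a crossed module over the Hopf algebra H, χ ∈ H⊗H a counital 2-cocycle, and β_χ(v) = v₍<1>₎⊗v₍<∞>₎ the twisted coaction. Then for all v ∈ V, χ⁻⁽¹⁾·(χ⁽¹⁾ ▷ v)₍<1>₎·χ⁽²⁾ ⊗ χ⁻⁽²⁾ ▷ (χ⁽¹⁾ ▷ v)₍<∞>₎ = β(v), where the displayed expression is the β_χ-twist formula with the roles of χ and χ⁻¹ exchanged (one implicit summation over each of the two independent copies χ and χ⁻¹). -/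

import Mathlib

open scoped TensorProduct
open TensorProduct LinearMap

namespace PaperTwist

variable (k H : Type) [Field k] [Ring H] [HopfAlgebra k H]

/-- The comultiplication of `H`. -/
noncomputable def Δ : H →ₗ[k] H ⊗[k] H := Coalgebra.comul

/-- The counit of `H`. -/
noncomputable def ε : H →ₗ[k] k := Coalgebra.counit

/-- The antipode of `H`. -/
noncomputable def S : H →ₗ[k] H := HopfAlgebra.antipode k

/-- `χ`, with (two-sided) inverse `χ'` in the algebra `H ⊗ H`, is a counital 2-cocycle:
`χ₂₃ · ((id ⊗ Δ) χ) = χ₁₂ · ((Δ ⊗ id) χ)` and `(ε ⊗ id) χ = 1 = (id ⊗ ε) χ`. -/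
def IsCocycle (χ χ' : H ⊗[k] H) : Prop :=
  χ * χ' = 1 ∧ χ' * χ = 1 ∧
    (1 ⊗ₜ[k] χ) * (LinearMap.lTensor H (Δ k H) χ) =
      (TensorProduct.assoc k H H H) ((χ ⊗ₜ[k] 1) * (LinearMap.rTensor H (Δ k H) χ)) ∧
    (TensorProduct.lid k H) ((LinearMap.rTensor H (ε k H)) χ) = 1 ∧
    (TensorProduct.rid k H) ((LinearMap.lTensor H (ε k H)) χ) = 1

variable (V : Type) [AddCommGroup V] [Module k V]

/-- A (left-left) crossed module (Drinfeld–Radford–Yetter module) over `H`: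
a left action `ρ` and a counital coassociative left coaction `β` satisfying
`h₁·v₍₁₎ ⊗ h₂ ▷ v₍∞₎ = (h₁ ▷ v)₍₁₎·h₂ ⊗ (h₁ ▷ v)₍∞₎`, the latter expressed via arbitrary
finite representations of `Δ h`. -/
structure IsCrossedModule (ρ : H →ₗ[k] V →ₗ[k] V) (β : V →ₗ[k] H ⊗[k] V) : Prop where
  act_one : ∀ v : V, ρ 1 v = v
  act_mul : ∀ (g h : H) (v : V), ρ (g * h) v = ρ g (ρ h v)
  coact_counit : ∀ v : V, (TensorProduct.lid k V) ((LinearMap.rTensor V (ε k H)) (β v)) = v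
  coact_coassoc : ∀ v : V,
    (LinearMap.rTensor V (Δ k H)) (β v)
      = (TensorProduct.assoc k H H V).symm ((LinearMap.lTensor H β) (β v))
  compat : ∀ (h : H) (v : V) (ι : Type) (s : Finset ι) (h1 h2 : ι → H),
    Δ k H h = ∑ i ∈ s, h1 i ⊗ₜ[k] h2 i →
    ∑ i ∈ s, (TensorProduct.map (LinearMap.mulLeft k (h1 i)) (ρ (h2 i))) (β v)
      = ∑ i ∈ s, (LinearMap.rTensor V (LinearMap.mulRight k (h2 i))) (β (ρ (h1 i) v))

/-- The twisted coaction `β_χ(v) = χ⁽¹⁾·(χ⁻⁽¹⁾ ▷ v)₍₁₎·χ⁻⁽²⁾ ⊗ χ⁽²⁾ ▷ (χ⁻⁽¹⁾ ▷ v)₍∞₎`,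
expressed through finite representations `χ = ∑ x1 i ⊗ x2 i`, `χ⁻¹ = ∑ y1 j ⊗ y2 j`. -/
noncomputable def twistedCoaction (ρ : H →ₗ[k] V →ₗ[k] V) (β : V →ₗ[k] H ⊗[k] V)
    {ι₁ ι₂ : Type} (s₁ : Finset ι₁) (x1 x2 : ι₁ → H) (s₂ : Finset ι₂) (y1 y2 : ι₂ → H) :
    V →ₗ[k] H ⊗[k] V :=
  ∑ i ∈ s₁, ∑ j ∈ s₂,
    (TensorProduct.map ((LinearMap.mulLeft k (x1 i)) ∘ₗ (LinearMap.mulRight k (y2 j)))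
        (ρ (x2 i))) ∘ₗ β ∘ₗ (ρ (y1 j))

/-- The twisted coproduct `Δ_χ(h) = χ · Δ(h) · χ⁻¹`. -/
noncomputable def twistedComul (χ χ' : H ⊗[k] H) : H →ₗ[k] H ⊗[k] H :=
  (LinearMap.mulLeft k χ) ∘ₗ (LinearMap.mulRight k χ') ∘ₗ (Δ k H)

end PaperTwist

open PaperTwist

/-! Let `H ⊗ H` act on `H ⊗ V` by `(a ⊗ b) • (h ⊗ v) = a h ⊗ b ▷ v` (`tensorAct`), and for
`γ : V → H ⊗ V` and `c = c⁽¹⁾ ⊗ c⁽²⁾` put `(γ ◁ c)(v) = γ(c⁽¹⁾ ▷ v) · c⁽²⁾` (`rightTwist`).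
Then `β_χ = χ • (β ◁ χ⁻¹)`. Right multiplication in the first factor commutes with the action,
so `(a • γ) ◁ c = a • (γ ◁ c)`, while `(γ ◁ c) ◁ b = γ ◁ (c b)` and `a • (a' • x) = (a a') • x`.
Hence twisting `β_χ` by `χ⁻¹` gives `(χ⁻¹ χ) • (β ◁ (χ⁻¹ χ)) = β`. -/

namespace PaperTwist

section TwistOperators

variable {k H V : Type} [CommRing k] [Ring H] [Algebra k H] [AddCommGroup V] [Module k V]

noncomputable def tensorAct (ρ : H →ₗ[k] V →ₗ[k] V) :
    H ⊗[k] H →ₗ[k] (H ⊗[k] V →ₗ[k] H ⊗[k] V) :=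
  TensorProduct.lift <|
    (TensorProduct.mapBilinear (RingHom.id k) H V H V).compl₁₂ (LinearMap.mul k H) ρ

@[simp]
lemma tensorAct_tmul (ρ : H →ₗ[k] V →ₗ[k] V) (a b : H) :
    tensorAct ρ (a ⊗ₜ[k] b) = TensorProduct.map (LinearMap.mulLeft k a) (ρ b) :=
  rfl

noncomputable def rightTwist (ρ : H →ₗ[k] V →ₗ[k] V) (γ : V →ₗ[k] H ⊗[k] V) :
    H ⊗[k] H →ₗ[k] (V →ₗ[k] H ⊗[k] V) :=
  TensorProduct.lift <| LinearMap.mk₂ k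
    (fun a b => LinearMap.rTensor V (LinearMap.mulRight k b) ∘ₗ γ ∘ₗ ρ a)
    (fun a a' b => by rw [map_add, LinearMap.comp_add, LinearMap.comp_add])
    (fun c a b => by rw [map_smul, LinearMap.comp_smul, LinearMap.comp_smul])
    (fun a b b' => by
      rw [← LinearMap.add_comp, ← LinearMap.rTensor_add]; congr 3; ext; simp [mul_add])
    (fun c a b => by
      rw [← LinearMap.smul_comp, ← LinearMap.rTensor_smul]; congr 3; ext; simp)

@[simp]
lemma rightTwist_tmul (ρ : H →ₗ[k] V →ₗ[k] V) (γ : V →ₗ[k] H ⊗[k] V) (a b : H) :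
    rightTwist ρ γ (a ⊗ₜ[k] b) = LinearMap.rTensor V (LinearMap.mulRight k b) ∘ₗ γ ∘ₗ ρ a :=
  rfl

lemma tensorAct_one (ρ : H →ₗ[k] V →ₗ[k] V) (hone : ρ 1 = LinearMap.id) :
    tensorAct ρ 1 = LinearMap.id := by
  rw [Algebra.TensorProduct.one_def, tensorAct_tmul, LinearMap.mulLeft_one, hone,
    TensorProduct.map_id]

lemma tensorAct_mul (ρ : H →ₗ[k] V →ₗ[k] V) (hmul : ∀ g h, ρ (g * h) = ρ g ∘ₗ ρ h)
    (a b : H ⊗[k] H) : tensorAct ρ (a * b) = tensorAct ρ a ∘ₗ tensorAct ρ b := by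
  induction a using TensorProduct.induction_on with
  | zero => simp
  | add a a' ha ha' => rw [add_mul, map_add, map_add, ha, ha', LinearMap.add_comp]
  | tmul a₁ a₂ =>
    induction b using TensorProduct.induction_on with
    | zero => simp
    | add b b' hb hb' => rw [mul_add, map_add, map_add, hb, hb', LinearMap.comp_add]
    | tmul b₁ b₂ =>
      rw [Algebra.TensorProduct.tmul_mul_tmul, tensorAct_tmul, tensorAct_tmul, tensorAct_tmul,
        LinearMap.mulLeft_mul, hmul, TensorProduct.map_comp]

lemma rightTwist_one (ρ : H →ₗ[k] V →ₗ[k] V) (hone : ρ 1 = LinearMap.id) (γ : V →ₗ[k] H ⊗[k] V) :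
    rightTwist ρ γ 1 = γ := by
  rw [Algebra.TensorProduct.one_def, rightTwist_tmul, LinearMap.mulRight_one,
    LinearMap.rTensor_id, hone, LinearMap.id_comp, LinearMap.comp_id]

lemma rTensor_mulRight_comp_tensorAct (ρ : H →ₗ[k] V →ₗ[k] V) (h : H) (a : H ⊗[k] H) :
    LinearMap.rTensor V (LinearMap.mulRight k h) ∘ₗ tensorAct ρ a
      = tensorAct ρ a ∘ₗ LinearMap.rTensor V (LinearMap.mulRight k h) := by
  induction a using TensorProduct.induction_on with
  | zero => simp
  | add a a' ha ha' => rw [map_add, LinearMap.comp_add, LinearMap.add_comp, ha, ha']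
  | tmul a₁ a₂ =>
    rw [tensorAct_tmul, LinearMap.rTensor_comp_map, LinearMap.map_comp_rTensor,
      ← Module.End.mul_eq_comp, ← Module.End.mul_eq_comp,
      (LinearMap.commute_mulLeft_right a₁ h).eq]

lemma rightTwist_tensorAct_comp (ρ : H →ₗ[k] V →ₗ[k] V) (γ : V →ₗ[k] H ⊗[k] V)
    (a b : H ⊗[k] H) :
    rightTwist ρ (tensorAct ρ a ∘ₗ γ) b = tensorAct ρ a ∘ₗ rightTwist ρ γ b := by
  induction b using TensorProduct.induction_on with
  | zero => simp
  | add b b' hb hb' => rw [map_add, map_add, hb, hb', LinearMap.comp_add]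
  | tmul b₁ b₂ =>
    simp only [rightTwist_tmul, ← LinearMap.comp_assoc, rTensor_mulRight_comp_tensorAct]

lemma rightTwist_rightTwist (ρ : H →ₗ[k] V →ₗ[k] V) (hmul : ∀ g h, ρ (g * h) = ρ g ∘ₗ ρ h)
    (γ : V →ₗ[k] H ⊗[k] V) (b c : H ⊗[k] H) :
    rightTwist ρ (rightTwist ρ γ c) b = rightTwist ρ γ (c * b) := by
  induction b using TensorProduct.induction_on with
  | zero => simp
  | add b b' hb hb' => rw [map_add, hb, hb', mul_add, map_add]
  | tmul b₁ b₂ =>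
    induction c using TensorProduct.induction_on with
    | zero => simp
    | add c c' hc hc' =>
      rw [map_add, rightTwist_tmul, LinearMap.add_comp, LinearMap.comp_add, ← rightTwist_tmul,
        ← rightTwist_tmul, hc, hc', add_mul, map_add]
    | tmul c₁ c₂ =>
      rw [Algebra.TensorProduct.tmul_mul_tmul, rightTwist_tmul, rightTwist_tmul, rightTwist_tmul,
        hmul, LinearMap.mulRight_mul, LinearMap.rTensor_comp]
      rfl

end TwistOperators

lemma twistedCoaction_eq_tensorAct_comp_rightTwist {k H V : Type} [Field k] [Ring H]
    [HopfAlgebra k H] [AddCommGroup V] [Module k V]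
    (ρ : H →ₗ[k] V →ₗ[k] V) (β : V →ₗ[k] H ⊗[k] V)
    {ι₁ ι₂ : Type} (s₁ : Finset ι₁) (x1 x2 : ι₁ → H) (s₂ : Finset ι₂) (y1 y2 : ι₂ → H) :
    twistedCoaction k H V ρ β s₁ x1 x2 s₂ y1 y2
      = tensorAct ρ (∑ i ∈ s₁, x1 i ⊗ₜ[k] x2 i) ∘ₗ rightTwist ρ β (∑ j ∈ s₂, y1 j ⊗ₜ[k] y2 j) := by
  ext v : 1
  simp only [twistedCoaction, map_sum, LinearMap.sum_apply, LinearMap.comp_apply, tensorAct_tmul,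
    rightTwist_tmul, LinearMap.map_rTensor]
  exact Finset.sum_comm

end PaperTwist

theorem statement_5_general
    {k H V : Type} [Field k] [Ring H] [HopfAlgebra k H] [AddCommGroup V] [Module k V]
    (ρ : H →ₗ[k] V →ₗ[k] V) (β : V →ₗ[k] H ⊗[k] V)
    (hcm : IsCrossedModule k H V ρ β)
    (χ χ' : H ⊗[k] H) (hχ : IsCocycle k H χ χ')
    {ι₁ ι₂ : Type} (s₁ : Finset ι₁) (x1 x2 : ι₁ → H) (s₂ : Finset ι₂) (y1 y2 : ι₂ → H)
    (hx : χ = ∑ i ∈ s₁, x1 i ⊗ₜ[k] x2 i) (hy : χ' = ∑ j ∈ s₂, y1 j ⊗ₜ[k] y2 j) :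
    ∀ v : V,
      twistedCoaction k H V ρ (twistedCoaction k H V ρ β s₁ x1 x2 s₂ y1 y2)
          s₂ y1 y2 s₁ x1 x2 v
        = β v := by
  intro v
  have hone : ρ 1 = LinearMap.id := LinearMap.ext hcm.act_one
  have hmul : ∀ g h, ρ (g * h) = ρ g ∘ₗ ρ h := fun g h => LinearMap.ext (hcm.act_mul g h)
  rw [twistedCoaction_eq_tensorAct_comp_rightTwist, twistedCoaction_eq_tensorAct_comp_rightTwist,
    ← hx, ← hy, rightTwist_tensorAct_comp, rightTwist_rightTwist ρ hmul, ← LinearMap.comp_assoc,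
    ← tensorAct_mul ρ hmul, hχ.2.1, tensorAct_one ρ hone, rightTwist_one ρ hone, LinearMap.id_comp]

/-- Twisting by `χ⁻¹` undoes twisting by `χ` on the coaction of a crossed
module: applying the twist formula with the roles of `χ` and `χ⁻¹` exchanged to the twisted
coaction `β_χ` recovers the original coaction `β`, i.e.
`χ⁻⁽¹⁾·(χ⁽¹⁾ ▷ v)₍<1>₎·χ⁽²⁾ ⊗ χ⁻⁽²⁾ ▷ (χ⁽¹⁾ ▷ v)₍<∞>₎ = β(v)`. -/
theorem statement_5
    {k H V : Type} [Field k] [Ring H] [HopfAlgebra k H] [AddCommGroup V] [Module k V]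
    (hS : Function.Bijective (S k H))
    (ρ : H →ₗ[k] V →ₗ[k] V) (β : V →ₗ[k] H ⊗[k] V)
    (hcm : IsCrossedModule k H V ρ β)
    (χ χ' : H ⊗[k] H) (hχ : IsCocycle k H χ χ')
    {ι₁ ι₂ : Type} (s₁ : Finset ι₁) (x1 x2 : ι₁ → H) (s₂ : Finset ι₂) (y1 y2 : ι₂ → H)
    (hx : χ = ∑ i ∈ s₁, x1 i ⊗ₜ[k] x2 i) (hy : χ' = ∑ j ∈ s₂, y1 j ⊗ₜ[k] y2 j) :
    ∀ v : V,
      twistedCoaction k H V ρ (twistedCoaction k H V ρ β s₁ x1 x2 s₂ y1 y2)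
          s₂ y1 y2 s₁ x1 x2 v
        = β v :=
  statement_5_general ρ β hcm χ χ' hχ s₁ x1 x2 s₂ y1 y2 hx hy
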